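/- arXiv:1305.7294 — 9 statements merged into one kernel-verified Lean document; each statement's English description precedes it below -/
import Mathlib

section
/- Let p be a prime, q a power of p, m ≥ 1, n = q^m - 1, and e = q^m - 2. For 0 ≤ i < n with base-q digits i_0, ..., i_{m-1}, define C_{e,q,m}(i) = Σ_{j=0}^{m-1} C(e, q^j·i mod n) mod p. Then C_{e,q,m}(i) ≡ C(q^m - 1, i)·(s_q(i) + m) mod p, where s_q(i) = Σ_{j=0}^{m-1} i_j is the base-q digit sum of i. -/
/-!
Since `q ^ m ≡ 0 (mod p)` and `p` divides every inner binomial coefficient of `q ^ m`, Pascal's rule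
gives `C(q ^ m - 1, k) ≡ (-1) ^ k`, and then `(N + 1) C(N, k) = (k + 1) C(N + 1, k + 1)` with
`N = q ^ m - 2` gives `C(e, k) ≡ (k + 1) (-1) ^ k (mod p)`. Multiplying by `q ^ j` modulo
`q ^ m - 1` rotates the base-`q` digits of `i`, so `q ^ j i mod n` is congruent mod `p` to its
lowest digit, which runs through all digits of `i` as `j` varies; the signs all equal `(-1) ^ i`
because `(-1) ^ q = -1` and `(-1) ^ n = 1` in `ZMod p`.
-/

open Finset

namespace Nat

theorem mul_add_mod_mul_sub_one {Q R a b : ℕ} (ha : a < Q) (hb : b < R)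
    (hab : R * a + b < Q * R - 1) : Q * (R * a + b) % (Q * R - 1) = a + Q * b := by
  obtain ⟨N, hN⟩ : ∃ N, Q * R = N + 1 := ⟨Q * R - 1, by have := Nat.mul_le_mul ha hb; omega⟩
  rw [hN, Nat.add_sub_cancel] at hab ⊢
  have hlt : a + Q * b < N := by
    rcases Nat.lt_or_ge (b + 1) R with hb1 | hb1
    · nlinarith [Nat.mul_le_mul_left Q hb1]
    · obtain rfl : R = b + 1 := by omega
      have : a + 1 < Q := by
        by_contra! h
        nlinarith [Nat.mul_le_mul_right (b + 1) h]
      nlinarith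
  have hsplit : Q * (R * a + b) = N * a + (a + Q * b) := by
    linear_combination a * hN
  rw [hsplit, Nat.mul_add_mod, Nat.mod_eq_of_lt hlt]

theorem pow_mul_mod_pow_sub_one {q m j i : ℕ} (hj : j ≤ m) (hi : i < q ^ m - 1) :
    q ^ j * i % (q ^ m - 1) = i / q ^ (m - j) + q ^ j * (i % q ^ (m - j)) := by
  have hq : 0 < q := Nat.pos_of_ne_zero <| by rintro rfl; cases m <;> simp at hi
  have hQR : q ^ j * q ^ (m - j) = q ^ m := by rw [← pow_add, Nat.add_sub_cancel' hj]
  have hR : 0 < q ^ (m - j) := by positivity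
  have ha : i / q ^ (m - j) < q ^ j :=
    Nat.div_lt_of_lt_mul (by rw [mul_comm, hQR]; omega)
  have key := mul_add_mod_mul_sub_one ha (Nat.mod_lt i hR)
    (by rw [Nat.div_add_mod, hQR]; exact hi)
  rwa [Nat.div_add_mod, hQR] at key

theorem sum_range_pow_mul_mod_pow_sub_one_mod {q m i : ℕ} (hi : i < q ^ m - 1) :
    ∑ j ∈ range m, q ^ j * i % (q ^ m - 1) % q = ∑ j ∈ range m, i / q ^ j % q := by
  obtain ⟨m, rfl⟩ : ∃ m', m = m' + 1 := ⟨m - 1, by cases m <;> simp_all⟩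
  rw [sum_range_succ', sum_range_succ']
  congr 1
  · have hshift : ∀ j ∈ range m,
        q ^ (j + 1) * i % (q ^ (m + 1) - 1) % q = i / q ^ (m - 1 - j + 1) % q := by
      intro j hj
      rw [mem_range] at hj
      rw [pow_mul_mod_pow_sub_one (by omega) hi, pow_succ', mul_assoc,
        Nat.add_mul_mod_self_left, show m + 1 - (j + 1) = m - 1 - j + 1 by omega]
    rw [sum_congr rfl hshift, sum_range_reflect (fun t => i / q ^ (t + 1) % q)]
  · simp [Nat.mod_eq_of_lt hi]

end Nat

namespace ZMod

variable {p : ℕ} [hp : Fact p.Prime]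

theorem natCast_prime_pow_sub_one {k : ℕ} (hk : k ≠ 0) : ((p ^ k - 1 : ℕ) : ZMod p) = -1 := by
  rw [Nat.cast_sub (Nat.one_le_pow _ _ hp.out.pos), Nat.cast_pow, natCast_self, zero_pow hk,
    Nat.cast_one, zero_sub]

theorem natCast_choose_prime_pow_sub_one {k j : ℕ} (hj : j < p ^ k) :
    ((p ^ k - 1).choose j : ZMod p) = (-1) ^ j := by
  induction j with
  | zero => simp
  | succ j ih =>
    obtain ⟨N, hN⟩ : ∃ N, p ^ k = N + 1 := ⟨p ^ k - 1, by omega⟩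
    have hdvd : (((p ^ k).choose (j + 1) : ℕ) : ZMod p) = 0 :=
      (natCast_eq_zero_iff _ _).2 (hp.out.dvd_choose_pow (by omega) hj.ne)
    rw [hN, Nat.choose_succ_succ', Nat.cast_add] at hdvd
    rw [hN, Nat.add_sub_cancel] at ih ⊢
    rw [ih (by omega)] at hdvd
    linear_combination hdvd

theorem natCast_choose_prime_pow_sub_two {k j : ℕ} (hj : j < p ^ k - 1) :
    ((p ^ k - 2).choose j : ZMod p) = (j + 1) * (-1) ^ j := by
  have hk : k ≠ 0 := by rintro rfl; simp at hj
  have h := congrArg (Nat.cast : ℕ → ZMod p) (Nat.add_one_mul_choose_eq (p ^ k - 2) j)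
  rw [show p ^ k - 2 + 1 = p ^ k - 1 by omega] at h
  push_cast [natCast_prime_pow_sub_one hk,
    natCast_choose_prime_pow_sub_one (by omega : j + 1 < p ^ k)] at h
  linear_combination -h

theorem neg_one_pow_pow_mul_mod {s m j i : ℕ} :
    (-1 : ZMod p) ^ ((p ^ s) ^ j * i % ((p ^ s) ^ m - 1)) = (-1) ^ i := by
  have hfrob : ∀ t, (-1 : ZMod p) ^ (p ^ s) ^ t = -1 := fun t => by
    rw [← pow_mul, pow_card_pow]
  have hperiod : (-1 : ZMod p) ^ ((p ^ s) ^ m - 1) = 1 := by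
    have h := hfrob m
    rw [← Nat.sub_add_cancel (Nat.one_le_pow _ _ (pow_pos hp.out.pos s)), pow_succ] at h
    linear_combination -h
  rw [← pow_eq_pow_mod _ hperiod, pow_mul, hfrob]

theorem natCast_mod_of_dvd {q : ℕ} (hpq : p ∣ q) (x : ℕ) : ((x % q : ℕ) : ZMod p) = x :=
  (natCast_eq_natCast_iff _ _ _).2 ((Nat.mod_modEq x q).of_dvd hpq)

end ZMod

theorem stmt_1_general (p s m q n e : ℕ) (hp : p.Prime) (hq : q = p ^ s)
    (hn : n = q ^ m - 1) (he : e = q ^ m - 2)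
    (i : ℕ) (hi : i < n) :
    (∑ j ∈ Finset.range m, Nat.choose e ((q ^ j * i) % n)) ≡
      Nat.choose (q ^ m - 1) i *
        ((∑ j ∈ Finset.range m, (i / q ^ j) % q) + m) [MOD p] := by
  have : Fact p.Prime := ⟨hp⟩
  have hs : s ≠ 0 := by rintro rfl; subst hq hn; simp at hi
  have hpq : p ∣ q := hq ▸ dvd_pow_self p hs
  have hqm : q ^ m = p ^ (s * m) := by rw [hq, pow_mul]
  have hterm : ∀ j ∈ range m, (e.choose (q ^ j * i % n) : ZMod p) =
      ((q ^ j * i % n % q : ℕ) + 1) * (-1) ^ i := by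
    intro j _
    have hlt : q ^ j * i % n < p ^ (s * m) - 1 := hqm ▸ hn ▸ Nat.mod_lt _ (by omega)
    rw [he, hqm, ZMod.natCast_choose_prime_pow_sub_two hlt, ZMod.natCast_mod_of_dvd hpq, hn, hq,
      ZMod.neg_one_pow_pow_mul_mod]
  rw [← ZMod.natCast_eq_natCast_iff]
  push_cast
  rw [sum_congr rfl hterm, ← sum_mul, sum_add_distrib, sum_const, card_range, nsmul_one,
    ← Nat.cast_sum, hn, Nat.sum_range_pow_mul_mod_pow_sub_one_mod (hn ▸ hi), hqm,
    ZMod.natCast_choose_prime_pow_sub_one (by omega)]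
  push_cast
  ring

theorem stmt_1 (p s m q n e : ℕ) (hp : p.Prime) (hs : 1 ≤ s) (hq : q = p ^ s)
    (hm : 1 ≤ m) (hn : n = q ^ m - 1) (he : e = q ^ m - 2)
    (i : ℕ) (hi : i < n) :
    (∑ j ∈ Finset.range m, Nat.choose e ((q ^ j * i) % n)) ≡
      Nat.choose (q ^ m - 1) i *
        ((∑ j ∈ Finset.range m, (i / q ^ j) % q) + m) [MOD p] :=
  stmt_1_general p s m q n e hp hq hn he i hi
end

section
/- Let p be a prime, q a power of p, m ≥ 1, and n = q^m - 1. The number of integers i with 0 ≤ i ≤ n (equivalently, 0 ≤ i < q^m) whose base-q digit sum s_q(i) satisfies s_q(i) + m ≢ 0 mod p is exactly q^m·(1 - 1/p). -/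
/-! Write `i = q t + d` with `d < q`: the digit sum of `i` is `d` plus that of `t`. For fixed `t`,
`d` runs through `q` consecutive integers, and since `p ∣ q` exactly `q / p` of them put the total
in the class `0 mod p`. Hence exactly `q ^ m / p` of the `i < q ^ m` have `s_q(i) + m ≡ 0 mod p`. -/

open Finset

def digitSum (q m i : ℕ) : ℕ := ∑ j ∈ range m, i / q ^ j % q

theorem Finset.sum_range_mul_eq_sum_sum {M : Type*} [AddCommMonoid M] (f : ℕ → M) (a q : ℕ) :
    ∑ i ∈ range (a * q), f i = ∑ t ∈ range a, ∑ d ∈ range q, f (q * t + d) := by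
  induction a with
  | zero => simp
  | succ a ih => rw [add_one_mul, sum_range_add, ih, sum_range_succ, mul_comm q a]

theorem digitSum_succ_mul_add {q d : ℕ} (hd : d < q) (m t : ℕ) :
    digitSum q (m + 1) (q * t + d) = d + digitSum q m t := by
  have hq : 0 < q := d.zero_le.trans_lt hd
  have hdiv : (q * t + d) / q = t := by rw [Nat.mul_add_div hq, Nat.div_eq_of_lt hd, add_zero]
  rw [digitSum, sum_range_succ', add_comm, pow_zero, Nat.div_one, Nat.mul_add_mod,
    Nat.mod_eq_of_lt hd, digitSum]
  congr 1
  refine sum_congr rfl fun j _ => ?_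
  rw [pow_succ', ← Nat.div_div_eq_div_mul, hdiv]

theorem card_filter_add_mod_eq_zero {p q : ℕ} (hpq : p ∣ q) (c : ℕ) :
    #{d ∈ range q | (d + c) % p = 0} = q / p := by
  rcases p.eq_zero_or_pos with rfl | hp
  · simp [zero_dvd_iff.mp hpq]
  have hneg : p - c % p + c ≡ 0 [MOD p] := by
    rw [Nat.ModEq, ← Nat.add_mod_mod, Nat.sub_add_cancel (Nat.mod_lt c hp).le, Nat.mod_self,
      Nat.zero_mod]
  have hiff : ∀ d, (d + c) % p = 0 ↔ d ≡ p - c % p [MOD p] := fun d => by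
    rw [← Nat.zero_mod p]
    exact ⟨fun h => Nat.ModEq.add_right_cancel' c (Nat.ModEq.trans h hneg.symm),
      fun h => Nat.ModEq.trans (h.add_right c) hneg⟩
  simp_rw [hiff, ← Nat.count_eq_card_filter_range, Nat.count_modEq_card _ hp,
    Nat.mod_eq_zero_of_dvd hpq]
  simp

theorem card_filter_digitSum_add_mod_eq_zero {p q : ℕ} (hpq : p ∣ q) (c m : ℕ) :
    #{i ∈ range (q ^ (m + 1)) | (digitSum q (m + 1) i + c) % p = 0} = q ^ (m + 1) / p := by
  rw [card_filter, pow_succ, sum_range_mul_eq_sum_sum]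
  calc ∑ t ∈ range (q ^ m), ∑ d ∈ range q,
        (if (digitSum q (m + 1) (q * t + d) + c) % p = 0 then 1 else 0)
      = ∑ t ∈ range (q ^ m), #{d ∈ range q | (d + (digitSum q m t + c)) % p = 0} := by
        refine sum_congr rfl fun t _ => ?_
        rw [card_filter]
        refine sum_congr rfl fun d hd => ?_
        rw [digitSum_succ_mul_add (mem_range.mp hd), add_assoc]
    _ = q ^ m * (q / p) := by simp only [card_filter_add_mod_eq_zero hpq, sum_const, card_range,
        smul_eq_mul]
    _ = q ^ m * q / p := (Nat.mul_div_assoc _ hpq).symm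

theorem stmt_2_general (p s m q : ℕ) (hs : 1 ≤ s) (hq : q = p ^ s)
    (hm : 1 ≤ m) :
    ((Finset.range (q ^ m)).filter
        (fun i => ((∑ j ∈ Finset.range m, (i / q ^ j) % q) + m) % p ≠ 0)).card =
      q ^ m - q ^ m / p := by
  have hpq : p ∣ q := hq ▸ dvd_pow_self p (by omega)
  obtain ⟨k, rfl⟩ : ∃ k, m = k + 1 := ⟨m - 1, by omega⟩
  rw [filter_not, card_sdiff_of_subset (filter_subset _ _), card_range]
  exact congrArg _ (card_filter_digitSum_add_mod_eq_zero hpq (k + 1) k)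

theorem stmt_2 (p s m q : ℕ) (hp : p.Prime) (hs : 1 ≤ s) (hq : q = p ^ s)
    (hm : 1 ≤ m) :
    ((Finset.range (q ^ m)).filter
        (fun i => ((∑ j ∈ Finset.range m, (i / q ^ j) % q) + m) % p ≠ 0)).card =
      q ^ m - q ^ m / p :=
  stmt_2_general p s m q hs hq hm
end

section
/- Let m = 5i with i ≥ 2, and for 2 ≤ l ≤ i let y be a bit-sequence of length m of the form 0^{4i} 1 * ⋯ * 1 0^{i-l} where the block 1*⋯*1 has length l, starts and ends with 1, and the middle l-2 bits are arbitrary (i.e., y_j = 0 for j ≥ i, y_{i-1} = y_{i-l} = 1, y_j = 0 for 0 ≤ j < i-l). Then the m cyclic shifts of y are pairwise distinct; that is, the orbit of y under cyclic shifts has size exactly m. -/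
/-! If the rotations by `j₁ < j₂` agree, the word is invariant under rotation by `d = j₂ - j₁`,
hence also by `m - d`. The highest one-bit `p = i - 1` is then carried to `p + d` or to
`p + m - d`; since `2p < m`, one of them lies in the zero block `[i, m)`. -/

section Rotation

variable {α : Type*} {m : ℕ} {y : ℕ → α}

theorem mod_periodic_of_rotate_eq {j₁ j₂ : ℕ} (hj : j₁ ≤ j₂) (hj₁ : j₁ < m)
    (h : ∀ k < m, y ((k + j₁) % m) = y ((k + j₂) % m)) (t : ℕ) :
    y (t % m) = y ((t + (j₂ - j₁)) % m) := by
  have hk := h ((t + (m - j₁)) % m) (Nat.mod_lt _ (by omega))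
  rwa [Nat.mod_add_mod, Nat.mod_add_mod, show t + (m - j₁) + j₁ = t + m by omega,
    show t + (m - j₁) + j₂ = t + (j₂ - j₁) + m by omega, Nat.add_mod_right,
    Nat.add_mod_right] at hk

theorem not_mod_periodic_of_ne_after {p d : ℕ} (hpm : 2 * p < m)
    (hy : ∀ j, p < j → j < m → y j ≠ y p) (hd₀ : 0 < d) (hdm : d < m)
    (hper : ∀ t, y (t % m) = y ((t + d) % m)) : False := by
  by_cases hpd : p + d < m
  · have hp := hper p
    rw [Nat.mod_eq_of_lt (by omega), Nat.mod_eq_of_lt hpd] at hp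
    exact hy (p + d) (by omega) hpd hp.symm
  · have hp := hper (p + m - d)
    rw [show p + m - d + d = p + m by omega, Nat.add_mod_right, Nat.mod_eq_of_lt (by omega),
      Nat.mod_eq_of_lt (by omega)] at hp
    exact hy (p + m - d) (by omega) (by omega) hp

theorem eq_of_rotate_eq_of_ne_after {p : ℕ} (hpm : 2 * p < m)
    (hy : ∀ j, p < j → j < m → y j ≠ y p) :
    ∀ j₁ < m, ∀ j₂ < m, (∀ k < m, y ((k + j₁) % m) = y ((k + j₂) % m)) → j₁ = j₂ := by
  intro j₁ hj₁ j₂ hj₂ h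
  wlog hle : j₁ ≤ j₂ generalizing j₁ j₂
  · exact (this j₂ hj₂ j₁ hj₁ (fun k hk => (h k hk).symm) (by omega)).symm
  by_contra hne
  exact not_mod_periodic_of_ne_after hpm hy (by omega) (by omega)
    (mod_periodic_of_rotate_eq hle hj₁ h)

end Rotation

theorem stmt_5_general (i m : ℕ) (hm : m = 5 * i)
    (y : ℕ → Bool)
    (h0 : ∀ j, i ≤ j → j < m → y j = false)
    (h1 : y (i - 1) = true) :
    ∀ j1 < m, ∀ j2 < m,
      (∀ k < m, y ((k + j1) % m) = y ((k + j2) % m)) → j1 = j2 := by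
  intro j1 hj1
  refine eq_of_rotate_eq_of_ne_after (p := i - 1) (by omega) (fun j hj hjm => ?_) j1 hj1
  rw [h0 j (by omega) hjm, h1]
  decide

theorem stmt_5 (i l m : ℕ) (hi : 2 ≤ i) (hm : m = 5 * i)
    (hl2 : 2 ≤ l) (hli : l ≤ i) (y : ℕ → Bool)
    (h0 : ∀ j, i ≤ j → j < m → y j = false)
    (h1 : y (i - 1) = true) (h2 : y (i - l) = true)
    (h3 : ∀ j, j < i - l → y j = false) :
    ∀ j1 < m, ∀ j2 < m,
      (∀ k < m, y ((k + j1) % m) = y ((k + j2) % m)) → j1 = j2 :=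
  stmt_5_general i m hm y h0 h1
end

section
/- Let m = 5i with i ≥ 2 and let e have binary bits e_j = 1 exactly for j ∈ {0,...,i-1} ∪ {2i, 3i, 4i}. Let y be a length-m bit sequence with y_j = 0 for j ≥ i, y_{i-1} = y_{i-l} = 1, and y_j = 0 for 0 ≤ j < i-l, where 2 ≤ l ≤ i. Then for 0 ≤ j ≤ i-1, the cyclic shift τ^j(y) is covered by e (meaning every 1-bit of τ^j(y) is a 1-bit of e) if and only if 0 ≤ j ≤ i-l. Consequently the number of cyclic shifts σ of y (over all σ = τ^j, 0 ≤ j < m) with σ(y) covered by e equals i - l + 1, and this count is odd if and only if l ≡ i mod 2. -/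
/-!
Every 1-bit of `y` lies in the window `[i - l, i)`, and the ends `i - l`, `i - 1` of that window
are 1-bits. A shift by `j ≤ i - l` moves the window into `[0, i)`, the initial block of `e`.
A shift by `i - l < j < i` moves the 1-bit `i - l` into the empty gap `(4i, 5i)` of `e`.
A shift by `i ≤ j < 5i` sends the two ends of the window to positions `p` and `p - (l - 1)` with
`i ≤ p < 5i`, and no two bits of `e` above its initial block are closer than `i`.
-/

def ShiftCovered (m : ℕ) (y : ℕ → Bool) (E : Set ℕ) (j : ℕ) : Prop :=
  ∀ k < m, y ((k + j) % m) = true → k ∈ E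

def eSupport (i : ℕ) : Set ℕ :=
  {k | k < i ∨ k = 2 * i ∨ k = 3 * i ∨ k = 4 * i}

lemma mod_eq_ite_of_lt_two_mul {a m : ℕ} (h : a < 2 * m) :
    a % m = if a < m then a else a - m := by
  split_ifs with ha
  · exact Nat.mod_eq_of_lt ha
  · rw [Nat.mod_eq_sub_mod (not_lt.1 ha), Nat.mod_eq_of_lt (by omega)]

lemma add_mod_sub_mod {k j m : ℕ} (hk : k < m) (hj : j ≤ m) :
    ((k + j) % m + m - j) % m = k := by
  rw [mod_eq_ite_of_lt_two_mul (a := k + j) (by omega)]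
  rw [mod_eq_ite_of_lt_two_mul (by split_ifs <;> omega)]
  split_ifs <;> omega

lemma sub_mod_add_mod {r j m : ℕ} (hr : r < m) (hj : j ≤ m) :
    ((r + m - j) % m + j) % m = r := by
  rw [mod_eq_ite_of_lt_two_mul (a := r + m - j) (by omega)]
  rw [mod_eq_ite_of_lt_two_mul (by split_ifs <;> omega)]
  split_ifs <;> omega

/-- The 1-bits of `τ^j y` are the positions `(r - j) mod m` of the 1-bits `r` of `y`. -/
lemma shiftCovered_iff {m j : ℕ} {y : ℕ → Bool} {E : Set ℕ} (hj : j ≤ m) :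
    ShiftCovered m y E j ↔ ∀ r < m, y r = true → (r + m - j) % m ∈ E := by
  constructor
  · intro hcov r hr hy
    apply hcov _ (Nat.mod_lt _ (by omega))
    rwa [sub_mod_add_mod hr hj]
  · intro hsupp k hk hy
    have := hsupp _ (Nat.mod_lt _ (by omega)) hy
    rwa [add_mod_sub_mod hk hj] at this

lemma shiftCovered_eSupport_iff {i l j : ℕ} {y : ℕ → Bool} (hl2 : 2 ≤ l) (hli : l ≤ i)
    (h0 : ∀ r, i ≤ r → r < 5 * i → y r = false)
    (h1 : y (i - 1) = true) (h2 : y (i - l) = true)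
    (h3 : ∀ r, r < i - l → y r = false) (hj : j < 5 * i) :
    ShiftCovered (5 * i) y (eSupport i) j ↔ j ≤ i - l := by
  rw [shiftCovered_iff hj.le]
  constructor
  · intro hsupp
    by_contra! hlj
    have hlast := hsupp (i - 1) (by omega) h1
    have hfirst := hsupp (i - l) (by omega) h2
    simp only [eSupport, Set.mem_ofPred_eq] at hlast hfirst
    rw [mod_eq_ite_of_lt_two_mul (by omega)] at hlast hfirst
    split_ifs at hlast hfirst <;> omega
  · intro hjl r hr hy
    have hr_lt : r < i := by
      by_contra! h
      simp [h0 r h hr] at hy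
    have hr_ge : i - l ≤ r := by
      by_contra! h
      simp [h3 r h] at hy
    left
    rw [mod_eq_ite_of_lt_two_mul (by omega)]
    split_ifs <;> omega

theorem stmt_6_general (i l m : ℕ) (hm : m = 5 * i)
    (hl2 : 2 ≤ l) (hli : l ≤ i) (y : ℕ → Bool)
    (h0 : ∀ j, i ≤ j → j < m → y j = false)
    (h1 : y (i - 1) = true) (h2 : y (i - l) = true)
    (h3 : ∀ j, j < i - l → y j = false) :
    (∀ j < i,
      ((∀ k < m, y ((k + j) % m) = true →
          (k < i ∨ k = 2 * i ∨ k = 3 * i ∨ k = 4 * i)) ↔ j ≤ i - l)) ∧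
    ((Finset.range m).filter (fun j => ∀ k ∈ Finset.range m,
        y ((k + j) % m) = true →
          (k < i ∨ k = 2 * i ∨ k = 3 * i ∨ k = 4 * i))).card = i - l + 1 ∧
    (Odd (i - l + 1) ↔ l % 2 = i % 2) := by
  subst hm
  have hcov (j : ℕ) (hj : j < 5 * i) := shiftCovered_eSupport_iff hl2 hli h0 h1 h2 h3 hj
  refine ⟨fun j hj => hcov j (by omega), ?_, by rw [Nat.odd_iff]; omega⟩
  rw [← Finset.card_range (i - l + 1)]
  congr 1
  ext j
  simp only [Finset.mem_filter, Finset.mem_range]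
  constructor
  · rintro ⟨hj, hjcov⟩
    have := (hcov j hj).1 hjcov
    omega
  · intro hj
    exact ⟨by omega, (hcov j (by omega)).2 (by omega)⟩

theorem stmt_6 (i l m : ℕ) (hi : 2 ≤ i) (hm : m = 5 * i)
    (hl2 : 2 ≤ l) (hli : l ≤ i) (y : ℕ → Bool)
    (h0 : ∀ j, i ≤ j → j < m → y j = false)
    (h1 : y (i - 1) = true) (h2 : y (i - l) = true)
    (h3 : ∀ j, j < i - l → y j = false) :
    (∀ j < i,
      ((∀ k < m, y ((k + j) % m) = true →
          (k < i ∨ k = 2 * i ∨ k = 3 * i ∨ k = 4 * i)) ↔ j ≤ i - l)) ∧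
    ((Finset.range m).filter (fun j => ∀ k ∈ Finset.range m,
        y ((k + j) % m) = true →
          (k < i ∨ k = 2 * i ∨ k = 3 * i ∨ k = 4 * i))).card = i - l + 1 ∧
    (Odd (i - l + 1) ↔ l % 2 = i % 2) :=
  stmt_6_general i l m hm hl2 hli y h0 h1 h2 h3
end

section
/- Let m = 5i with i ≥ 2 and let e be the length-m bit sequence with 1-bits exactly at positions {0,...,i-1} ∪ {2i,3i,4i}. Let y be a length-m bit sequence satisfying: y_j = 0 for j ≥ i, j ∉ {2i,3i,4i}; y_j = 1 for some j ∈ {2i,3i,4i}; and at least two indices j ∈ {0,...,i-1} have y_j = 1. If σ = τ^j is a cyclic shift with σ(y) covered by e, then j ≡ 0 mod m (σ is the identity). -/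
/-!
Write `E = [0, i) ∪ {2i, 3i, 4i}` for the support of `e` and `s = -j mod m`, so that `σ(y)` is
covered by `e` iff `p + s ∈ E` for every `p` with `y p`. Take `a ≠ b` in `[0, i)` and `c` in
`{2i, 3i, 4i}` with `y a = y b = y c = true`. The only pairs of distinct points of `E` whose cyclic
difference lies strictly between `0` and `i` are pairs inside `[0, i)`, so `a + s` and `b + s` lie
in `[0, i)`, i.e. `-i < s < i`. Then `c + s ∈ E` forces `s ≡ 0 mod i`, whence `s = 0`.
-/

lemma Nat.exists_add_mod_eq {m j p : ℕ} (hj : j < m) (hp : p < m) :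
    ∃ k < m, (k + j) % m = p ∧ (k + j = p ∨ k + j = p + m) := by
  rcases le_or_gt j p with hjp | hpj
  · exact ⟨p - j, by omega, by rw [Nat.sub_add_cancel hjp, Nat.mod_eq_of_lt hp], by omega⟩
  · refine ⟨p + m - j, by omega, ?_, by omega⟩
    rw [Nat.sub_add_cancel (by omega), Nat.add_mod_right, Nat.mod_eq_of_lt hp]

theorem stmt_9_general (i m : ℕ) (hm : m = 5 * i) (y : ℕ → Bool)
    (h1 : y (2 * i) = true ∨ y (3 * i) = true ∨ y (4 * i) = true)
    (h2 : 2 ≤ ((Finset.range i).filter (fun j => y j = true)).card)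
    (j : ℕ) (hj : j < m)
    (hcov : ∀ k < m, y ((k + j) % m) = true →
      (k < i ∨ k = 2 * i ∨ k = 3 * i ∨ k = 4 * i)) : j = 0 := by
  have preimage_mem : ∀ p < m, y p = true → ∃ k, (k + j = p ∨ k + j = p + m) ∧
      (k < i ∨ k = 2 * i ∨ k = 3 * i ∨ k = 4 * i) := by
    intro p hp hyp
    obtain ⟨k, hkm, hmod, hsum⟩ := Nat.exists_add_mod_eq hj hp
    exact ⟨k, hsum, hcov k hkm (hmod ▸ hyp)⟩
  obtain ⟨a, ha, b, hb, hab⟩ := Finset.one_lt_card.mp h2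
  simp only [Finset.mem_filter, Finset.mem_range] at ha hb
  obtain ⟨c, hc, hyc⟩ : ∃ c, (c = 2 * i ∨ c = 3 * i ∨ c = 4 * i) ∧ y c = true := by
    rcases h1 with h | h | h
    exacts [⟨_, Or.inl rfl, h⟩, ⟨_, Or.inr (Or.inl rfl), h⟩, ⟨_, Or.inr (Or.inr rfl), h⟩]
  obtain ⟨ka, hka, hka'⟩ := preimage_mem a (by omega) ha.2
  obtain ⟨kb, hkb, hkb'⟩ := preimage_mem b (by omega) hb.2
  obtain ⟨kc, hkc, hkc'⟩ := preimage_mem c (by omega) hyc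
  have hka_lt : ka < i := by omega
  have hkb_lt : kb < i := by omega
  omega

theorem stmt_9 (i m : ℕ) (hi : 2 ≤ i) (hm : m = 5 * i) (y : ℕ → Bool)
    (h0 : ∀ j, i ≤ j → j < m → j ≠ 2 * i → j ≠ 3 * i → j ≠ 4 * i → y j = false)
    (h1 : y (2 * i) = true ∨ y (3 * i) = true ∨ y (4 * i) = true)
    (h2 : 2 ≤ ((Finset.range i).filter (fun j => y j = true)).card)
    (j : ℕ) (hj : j < m)
    (hcov : ∀ k < m, y ((k + j) % m) = true →
      (k < i ∨ k = 2 * i ∨ k = 3 * i ∨ k = 4 * i)) : j = 0 :=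
  stmt_9_general i m hm y h1 h2 j hj hcov
end

section
/- Let m = 5i with i ≥ 2, e the length-m bit sequence with 1-bits at {0,...,i-1} ∪ {2i,3i,4i}, and let y be the length-m bit sequence with 1-bits exactly at {2i, 3i, 4i}. Then the number of cyclic shifts τ^j (0 ≤ j < m) with τ^j(y) covered by e is exactly 2, namely j = 0 and j = 4i; hence y is an 'even' sequence. -/
/-!
Only the set bits `2i, 3i, 4i` of `y` constrain a shift `j`: each is hit by exactly one position
`k < 5i`, namely `k ≡ t - j (mod 5i)`, and these three positions `2i - j, 3i - j, 4i - j` (mod `5i`)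
must all lie in `{0, …, i-1} ∪ {2i, 3i, 4i}`. They are spaced by `i`, so this happens only for
`j = 0` and for `j = 4i`, where they become `3i, 4i, 0`.
-/

open Finset

theorem Nat.testBit_sum_two_pow (s : Finset ℕ) (p : ℕ) :
    (∑ x ∈ s, 2 ^ x).testBit p = true ↔ p ∈ s := by
  rw [← Nat.mem_bitIndices, ← List.mem_toFinset, Finset.toFinset_bitIndices_sum_two_pow]

theorem Nat.testBit_two_pow_add_two_pow_add_two_pow {a b c : ℕ} (hab : a ≠ b) (hac : a ≠ c)
    (hbc : b ≠ c) (p : ℕ) :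
    (2 ^ a + 2 ^ b + 2 ^ c).testBit p = true ↔ p = a ∨ p = b ∨ p = c := by
  have hsum : 2 ^ a + 2 ^ b + 2 ^ c = ∑ x ∈ {a, b, c}, 2 ^ x := by
    rw [sum_insert (by simp [hab, hac]), sum_pair hbc, add_assoc]
  rw [hsum, Nat.testBit_sum_two_pow]
  simp only [mem_insert, mem_singleton]

theorem Nat.add_mod_eq_or_add_mod_add_eq {k j m : ℕ} (hk : k < m) (hj : j ≤ m) :
    (k + j) % m = k + j ∨ (k + j) % m + m = k + j := by
  rcases Nat.lt_or_ge (k + j) m with h | h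
  · exact .inl (Nat.mod_eq_of_lt h)
  · right
    rw [Nat.mod_eq_sub_mod h, Nat.mod_eq_of_lt (by omega)]
    omega

theorem Nat.exists_lt_add_mod_eq {j t m : ℕ} (hj : j ≤ m) (ht : t < m) :
    ∃ k < m, (k + j) % m = t :=
  ⟨(t + (m - j)) % m, Nat.mod_lt _ (by omega), by
    rw [Nat.mod_add_mod, show t + (m - j) + j = t + m by omega, Nat.add_mod_right,
      Nat.mod_eq_of_lt ht]⟩

theorem shift_covered_iff {i j : ℕ} (hj : j < 5 * i) :
    (∀ k < 5 * i, (2 ^ (2 * i) + 2 ^ (3 * i) + 2 ^ (4 * i) : ℕ).testBit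
        ((k + j) % (5 * i)) = true → (k < i ∨ k = 2 * i ∨ k = 3 * i ∨ k = 4 * i)) ↔
      j = 0 ∨ j = 4 * i := by
  simp only [Nat.testBit_two_pow_add_two_pow_add_two_pow (a := 2 * i) (b := 3 * i) (c := 4 * i)
      (by omega) (by omega) (by omega)]
  constructor
  · intro hcov
    have preimage_covered : ∀ t < 5 * i, (t = 2 * i ∨ t = 3 * i ∨ t = 4 * i) →
        ∃ k, (k + j = t ∨ k + j = t + 5 * i) ∧ (k < i ∨ k = 2 * i ∨ k = 3 * i ∨ k = 4 * i) := by
      intro t ht hbit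
      obtain ⟨k, hk, rfl⟩ := Nat.exists_lt_add_mod_eq hj.le ht
      exact ⟨k, by have := Nat.add_mod_eq_or_add_mod_add_eq hk hj.le; omega, hcov k hk hbit⟩
    obtain ⟨k₂, hk₂, hc₂⟩ := preimage_covered (2 * i) (by omega) (by omega)
    obtain ⟨k₃, hk₃, hc₃⟩ := preimage_covered (3 * i) (by omega) (by omega)
    obtain ⟨k₄, hk₄, hc₄⟩ := preimage_covered (4 * i) (by omega) (by omega)
    omega
  · rintro hj₀ k hk hbit
    have := Nat.add_mod_eq_or_add_mod_add_eq hk hj.le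
    omega

theorem stmt_11 (i m : ℕ) (hi : 2 ≤ i) (hm : m = 5 * i) :
    ((Finset.range m).filter (fun j => ∀ k ∈ Finset.range m,
        (2 ^ (2 * i) + 2 ^ (3 * i) + 2 ^ (4 * i) : ℕ).testBit ((k + j) % m) = true →
          (k < i ∨ k = 2 * i ∨ k = 3 * i ∨ k = 4 * i)) = ({0, 4 * i} : Finset ℕ)) ∧
    ((Finset.range m).filter (fun j => ∀ k ∈ Finset.range m,
        (2 ^ (2 * i) + 2 ^ (3 * i) + 2 ^ (4 * i) : ℕ).testBit ((k + j) % m) = true →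
          (k < i ∨ k = 2 * i ∨ k = 3 * i ∨ k = 4 * i))).card = 2 := by
  subst hm
  refine (fun hshifts => ⟨hshifts, by rw [hshifts, card_pair (by omega)]⟩) ?_
  ext j
  simp only [mem_filter, mem_range, mem_insert, mem_singleton]
  exact ⟨fun ⟨hj, hcov⟩ => (shift_covered_iff hj).1 hcov,
    fun h => have hj : j < 5 * i := by omega
      ⟨hj, (shift_covered_iff hj).2 h⟩⟩
end

section
/- Let m = 5i with i ≥ 2, e the length-m bit sequence with 1-bits at {0,...,i-1} ∪ {2i,3i,4i}. Let y⁽¹⁾ have 1-bits exactly at {3i, 4i} and y⁽²⁾ have 1-bits exactly at {2i, 4i}. Then: (a) y⁽¹⁾ and y⁽²⁾ are not cyclic shifts of each other; (b) the set of shifts j with τ^j(y⁽¹⁾) covered by e is {0, i, 4i}, and for y⁽²⁾ it is {0, 2i, 4i}; hence both are 'odd' sequences (3 covering shifts each). -/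
/-!
A word with exactly two 1-bits, at positions `a` and `b`, has its shift `τ^j` covered by `e`
iff both `a - j` and `b - j` (mod `m`) lie in the support of `e`. Once the cyclic differences are
written as explicit case splits, each claim is linear arithmetic in `i` and `j`; in particular
`y⁽¹⁾` and `y⁽²⁾` are not shifts of each other because their two 1-bits are `i` resp. `2i` apart
cyclically.
-/

theorem Nat.testBit_two_pow_add_two_pow {a b : ℕ} (hba : b < a) (p : ℕ) :
    (2 ^ a + 2 ^ b).testBit p = true ↔ p = a ∨ p = b := by
  rcases lt_trichotomy p a with hpa | rfl | hap
  · rw [Nat.testBit_two_pow_add_gt hpa, Nat.testBit_two_pow, decide_eq_true_iff]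
    omega
  · simp [Nat.testBit_two_pow_add_eq, hba.ne]
  · have hlt : 2 ^ a + 2 ^ b < 2 ^ p := calc
      2 ^ a + 2 ^ b < 2 ^ a + 2 ^ a := by gcongr; norm_num
      _ = 2 ^ (a + 1) := by ring
      _ ≤ 2 ^ p := Nat.pow_le_pow_right two_pos hap
    rw [Nat.testBit_eq_false_of_lt hlt, Bool.false_eq_true, false_iff]
    omega

-- `(a - j) mod m`, written without `%` so that `omega` can reason about it.
def shiftPreimage (m j a : ℕ) : ℕ := if j ≤ a then a - j else a + m - j

theorem shiftPreimage_lt {m j a : ℕ} (ha : a < m) (hj : j < m) : shiftPreimage m j a < m := by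
  unfold shiftPreimage
  split_ifs <;> omega

theorem add_mod_eq_iff_eq_shiftPreimage {m j a k : ℕ} (ha : a < m) (hj : j < m) (hk : k < m) :
    (k + j) % m = a ↔ k = shiftPreimage m j a := by
  rw [Nat.add_mod_eq_ite, Nat.mod_eq_of_lt hj, Nat.mod_eq_of_lt hk, shiftPreimage]
  split_ifs <;> omega

theorem testBit_two_pow_add_two_pow_shift_iff {m j a b k : ℕ} (hba : b < a) (ha : a < m)
    (hj : j < m) (hk : k < m) :
    (2 ^ a + 2 ^ b).testBit ((k + j) % m) = true ↔
      k = shiftPreimage m j a ∨ k = shiftPreimage m j b := by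
  rw [Nat.testBit_two_pow_add_two_pow hba, add_mod_eq_iff_eq_shiftPreimage ha hj hk,
    add_mod_eq_iff_eq_shiftPreimage (hba.trans ha) hj hk]

theorem forall_testBit_shift_imp_iff {m j a b : ℕ} (hba : b < a) (ha : a < m) (hj : j < m)
    (P : ℕ → Prop) :
    (∀ k ∈ Finset.range m, (2 ^ a + 2 ^ b).testBit ((k + j) % m) = true → P k) ↔
      P (shiftPreimage m j a) ∧ P (shiftPreimage m j b) := by
  have ha' := shiftPreimage_lt ha hj
  have hb' := shiftPreimage_lt (hba.trans ha) hj
  simp only [Finset.mem_range]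
  constructor
  · intro h
    exact ⟨h _ ha' ((testBit_two_pow_add_two_pow_shift_iff hba ha hj ha').2 (.inl rfl)),
      h _ hb' ((testBit_two_pow_add_two_pow_shift_iff hba ha hj hb').2 (.inr rfl))⟩
  · rintro ⟨hPa, hPb⟩ k hk hbit
    rcases (testBit_two_pow_add_two_pow_shift_iff hba ha hj hk).1 hbit with rfl | rfl
    exacts [hPa, hPb]

theorem filter_forall_testBit_shift_imp_eq {m a b : ℕ} (hba : b < a) (ha : a < m)
    (P : ℕ → Prop) [DecidablePred P] {s : Finset ℕ}
    (hs : ∀ j, j < m ∧ P (shiftPreimage m j a) ∧ P (shiftPreimage m j b) ↔ j ∈ s) :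
    (Finset.range m).filter (fun j => ∀ k ∈ Finset.range m,
        (2 ^ a + 2 ^ b).testBit ((k + j) % m) = true → P k) = s := by
  ext j
  rw [Finset.mem_filter, Finset.mem_range, ← hs]
  exact and_congr_right fun hj => forall_testBit_shift_imp_iff hba ha hj P

theorem not_exists_shift_two_pow_add_two_pow (i : ℕ) :
    ¬ ∃ j < 5 * i, ∀ k < 5 * i,
      (2 ^ (4 * i) + 2 ^ (3 * i)).testBit ((k + j) % (5 * i)) =
        (2 ^ (4 * i) + 2 ^ (2 * i)).testBit k := by
  rintro ⟨j, hj, h⟩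
  have h24 : 2 * i < 4 * i := by omega
  have at2 := h (2 * i) (by omega)
  have at4 := h (4 * i) (by omega)
  rw [(Nat.testBit_two_pow_add_two_pow h24 _).2 (.inr rfl),
    testBit_two_pow_add_two_pow_shift_iff (by omega) (by omega) hj (by omega)] at at2
  rw [(Nat.testBit_two_pow_add_two_pow h24 _).2 (.inl rfl),
    testBit_two_pow_add_two_pow_shift_iff (by omega) (by omega) hj (by omega)] at at4
  unfold shiftPreimage at at2 at4
  split_ifs at at2 at4 <;> omega

theorem stmt_13 (i m : ℕ) (hi : 2 ≤ i) (hm : m = 5 * i) :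
    (¬ ∃ j < m, ∀ k < m,
        (2 ^ (4 * i) + 2 ^ (3 * i) : ℕ).testBit ((k + j) % m) =
          (2 ^ (4 * i) + 2 ^ (2 * i) : ℕ).testBit k) ∧
    ((Finset.range m).filter (fun j => ∀ k ∈ Finset.range m,
        (2 ^ (4 * i) + 2 ^ (3 * i) : ℕ).testBit ((k + j) % m) = true →
          (k < i ∨ k = 2 * i ∨ k = 3 * i ∨ k = 4 * i)) =
      ({0, i, 4 * i} : Finset ℕ)) ∧
    ((Finset.range m).filter (fun j => ∀ k ∈ Finset.range m,
        (2 ^ (4 * i) + 2 ^ (2 * i) : ℕ).testBit ((k + j) % m) = true →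
          (k < i ∨ k = 2 * i ∨ k = 3 * i ∨ k = 4 * i)) =
      ({0, 2 * i, 4 * i} : Finset ℕ)) ∧
    Odd ((Finset.range m).filter (fun j => ∀ k ∈ Finset.range m,
        (2 ^ (4 * i) + 2 ^ (3 * i) : ℕ).testBit ((k + j) % m) = true →
          (k < i ∨ k = 2 * i ∨ k = 3 * i ∨ k = 4 * i))).card ∧
    Odd ((Finset.range m).filter (fun j => ∀ k ∈ Finset.range m,
        (2 ^ (4 * i) + 2 ^ (2 * i) : ℕ).testBit ((k + j) % m) = true →
          (k < i ∨ k = 2 * i ∨ k = 3 * i ∨ k = 4 * i))).card := by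
  subst hm
  have h34 : 3 * i < 4 * i := by omega
  have h24 : 2 * i < 4 * i := by omega
  have h45 : 4 * i < 5 * i := by omega
  have covered₁ := filter_forall_testBit_shift_imp_eq h34 h45 (s := {0, i, 4 * i})
    (fun k => k < i ∨ k = 2 * i ∨ k = 3 * i ∨ k = 4 * i) fun j => by
      simp only [Finset.mem_insert, Finset.mem_singleton, shiftPreimage]
      split_ifs <;> omega
  have covered₂ := filter_forall_testBit_shift_imp_eq h24 h45 (s := {0, 2 * i, 4 * i})
    (fun k => k < i ∨ k = 2 * i ∨ k = 3 * i ∨ k = 4 * i) fun j => by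
      simp only [Finset.mem_insert, Finset.mem_singleton, shiftPreimage]
      split_ifs <;> omega
  refine ⟨not_exists_shift_two_pow_add_two_pow i, covered₁, covered₂, ?_, ?_⟩
  · rw [covered₁, Finset.card_eq_three.2 ⟨0, i, 4 * i, by omega, by omega, by omega, rfl⟩]
    decide
  · rw [covered₂, Finset.card_eq_three.2 ⟨0, 2 * i, 4 * i, by omega, by omega, by omega, rfl⟩]
    decide
end

section
/- Let m = 5i with i ≥ 2, let e be the length-m bit sequence with 1-bits at {0,...,i-1} ∪ {2i,3i,4i}, and let 0 < j ≤ i-1. For y with 1-bits exactly at {j, 4i}, the set of shifts k with τ^k(y) covered by e is {0, 3i+j}, so y is an even sequence; similarly, for y with 1-bits exactly at {j, 2i} the covering shifts are {0, i+j}, and for y with 1-bits exactly at {j, 3i} they are {0, 2i+j}. -/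
lemma testBit_pair {j a : ℕ} (h : j < a) (p : ℕ) :
    (2 ^ j + 2 ^ a : ℕ).testBit p = true ↔ (p = j ∨ p = a) := by
  rw [add_comm]
  rcases lt_trichotomy p a with hp | rfl | hp
  · rw [Nat.testBit_two_pow_add_gt hp, Nat.testBit_two_pow]
    simp only [decide_eq_true_eq]
    omega
  · rw [Nat.testBit_two_pow_add_eq, Nat.testBit_two_pow]
    simp
    omega
  · rw [Nat.testBit_lt_two_pow]
    · simp only [Bool.false_eq_true, false_iff]; omega
    · have h2 : (2:ℕ)^j < 2^a := Nat.pow_lt_pow_right one_lt_two h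
      have h3 : (2:ℕ)^a + 2^j < 2^(a+1) := by
        rw [pow_succ]; omega
      have h4 : (2:ℕ)^(a+1) ≤ 2^p := Nat.pow_le_pow_right (by norm_num) (by omega)
      omega

lemma key_lemma (i m j a : ℕ) (hi : 2 ≤ i) (hm : m = 5 * i) (hj0 : 0 < j)
    (hji : j + 1 ≤ i) (ha : a = 2 * i ∨ a = 3 * i ∨ a = 4 * i) :
    ((Finset.range m).filter (fun k => ∀ l ∈ Finset.range m,
        (2 ^ j + 2 ^ a : ℕ).testBit ((l + k) % m) = true →
          (l < i ∨ l = 2 * i ∨ l = 3 * i ∨ l = 4 * i)) =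
      ({0, a - i + j} : Finset ℕ)) := by
  have hja : j < a := by omega
  have ham : a < m := by omega
  have hm0 : 0 < m := by omega
  ext k
  simp only [Finset.mem_filter, Finset.mem_range, Finset.mem_insert, Finset.mem_singleton]
  constructor
  · rintro ⟨hk, hP⟩
    obtain ⟨l₁, h₁m, h₁mod, h₁lin⟩ :
        ∃ l₁, l₁ < m ∧ (l₁ + k) % m = j ∧ (l₁ + k = j ∨ l₁ + k = j + m) := by
      rcases le_or_gt k j with h | h
      · exact ⟨j - k, by omega, by
          rw [show j - k + k = j by omega, Nat.mod_eq_of_lt (by omega)], by omega⟩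
      · exact ⟨j + m - k, by omega, by
          rw [show j + m - k + k = j + m by omega, Nat.add_mod_right,
            Nat.mod_eq_of_lt (by omega)], by omega⟩
    obtain ⟨l₂, h₂m, h₂mod, h₂lin⟩ :
        ∃ l₂, l₂ < m ∧ (l₂ + k) % m = a ∧ (l₂ + k = a ∨ l₂ + k = a + m) := by
      rcases le_or_gt k a with h | h
      · exact ⟨a - k, by omega, by
          rw [show a - k + k = a by omega, Nat.mod_eq_of_lt (by omega)], by omega⟩
      · exact ⟨a + m - k, by omega, by
          rw [show a + m - k + k = a + m by omega, Nat.add_mod_right,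
            Nat.mod_eq_of_lt (by omega)], by omega⟩
    have hu := hP l₁ h₁m
      ((testBit_pair hja _).mpr (Or.inl h₁mod))
    have hv := hP l₂ h₂m
      ((testBit_pair hja _).mpr (Or.inr h₂mod))
    rcases ha with rfl | rfl | rfl <;> omega
  · rintro (rfl | rfl)
    · refine ⟨hm0, ?_⟩
      intro l hl hbit
      rw [testBit_pair hja, Nat.mod_eq_of_lt (by omega)] at hbit
      rcases ha with rfl | rfl | rfl <;> omega
    · refine ⟨by omega, ?_⟩
      intro l hl hbit
      rw [testBit_pair hja] at hbit
      have hkey : l + (a - i + j) = j ∨ l + (a - i + j) = a ∨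
          l + (a - i + j) = j + m ∨ l + (a - i + j) = a + m := by
        rcases Nat.lt_or_ge (l + (a - i + j)) m with h | h
        · rw [Nat.mod_eq_of_lt h] at hbit; omega
        · rw [Nat.mod_eq_sub_mod h, Nat.mod_eq_of_lt (by omega)] at hbit; omega
      rcases ha with rfl | rfl | rfl <;> omega

theorem stmt_14 (i m j : ℕ) (hi : 2 ≤ i) (hm : m = 5 * i)
    (hj0 : 0 < j) (hji : j ≤ i - 1) :
    ((Finset.range m).filter (fun k => ∀ l ∈ Finset.range m,
        (2 ^ j + 2 ^ (4 * i) : ℕ).testBit ((l + k) % m) = true →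
          (l < i ∨ l = 2 * i ∨ l = 3 * i ∨ l = 4 * i)) =
      ({0, 3 * i + j} : Finset ℕ)) ∧
    ((Finset.range m).filter (fun k => ∀ l ∈ Finset.range m,
        (2 ^ j + 2 ^ (2 * i) : ℕ).testBit ((l + k) % m) = true →
          (l < i ∨ l = 2 * i ∨ l = 3 * i ∨ l = 4 * i)) =
      ({0, i + j} : Finset ℕ)) ∧
    ((Finset.range m).filter (fun k => ∀ l ∈ Finset.range m,
        (2 ^ j + 2 ^ (3 * i) : ℕ).testBit ((l + k) % m) = true →
          (l < i ∨ l = 2 * i ∨ l = 3 * i ∨ l = 4 * i)) =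
      ({0, 2 * i + j} : Finset ℕ)) := by
  have hji' : j + 1 ≤ i := by omega
  refine ⟨?_, ?_, ?_⟩
  · have h := key_lemma i m j (4 * i) hi hm hj0 hji' (Or.inr (Or.inr rfl))
    rwa [show 4 * i - i + j = 3 * i + j by omega] at h
  · have h := key_lemma i m j (2 * i) hi hm hj0 hji' (Or.inl rfl)
    rwa [show 2 * i - i + j = i + j by omega] at h
  · have h := key_lemma i m j (3 * i) hi hm hj0 hji' (Or.inr (Or.inl rfl))
    rwa [show 3 * i - i + j = 2 * i + j by omega] at h
end

section
/- Let m = 5i, i ≥ 1, n = 2^m - 1, e = 2^{4i} + 2^{3i} + 2^{2i} + 2^i - 1. For 0 < x < n of Hamming weight 1 (x = 2^j), the number of k ∈ {0,...,m-1} with τ^k(x) covered by e equals i + 3 (the support of e has size i + 3). Hence weight-1 integers x satisfy C_{e,2,m}(x) ≡ i + 3 ≡ i + 1 mod 2: they are 'odd' iff i is even. -/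
/-!
By Lucas's theorem `e.choose (2 ^ t)` is odd exactly when bit `t` of `e` is set, and
`2 ^ a % (2 ^ m - 1) = 2 ^ (a % m)`, so the sum runs once over all rotations of the single bit
of `2 ^ j` and counts the `i + 3` bits of `e`. For the covering count, a shift `k` covers `2 ^ j`
iff the unique `l` with `l + k ≡ j (mod m)` lies in the support of `e`; as `k ↦ j - k` permutes
`ℤ/mℤ`, this again counts the support.
-/

open Finset

theorem Nat.choose_two_pow_mod_two (N t : ℕ) :
    N.choose (2 ^ t) % 2 = if N.testBit t then 1 else 0 := by
  induction t generalizing N with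
  | zero =>
    rw [pow_zero, Nat.choose_one_right, Nat.testBit_zero]
    split_ifs <;> simp_all
  | succ t ih =>
    have lucas := Choose.choose_modEq_choose_mod_mul_choose_div_nat (n := N) (k := 2 ^ (t + 1))
      (p := 2)
    rw [Nat.pow_mod, Nat.mod_self, zero_pow t.succ_ne_zero, Nat.zero_mod, Nat.choose_zero_right,
      one_mul, pow_succ, Nat.mul_div_cancel _ two_pos] at lucas
    rw [pow_succ, lucas, ih, Nat.testBit_div_two]

theorem Nat.two_pow_mod_two_pow_sub_one {m : ℕ} (hm : 2 ≤ m) (a : ℕ) :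
    2 ^ a % (2 ^ m - 1) = 2 ^ (a % m) := by
  have hle : 2 ^ (a % m) ≤ 2 ^ (m - 1) :=
    Nat.pow_le_pow_right two_pos (by have := Nat.mod_lt a (by omega : 0 < m); omega)
  have hsplit : 2 ^ m = 2 * 2 ^ (m - 1) := by rw [← pow_succ']; congr 1; omega
  have htwo : 2 ≤ 2 ^ (m - 1) := Nat.le_self_pow (by omega) 2
  have hpos : 1 ≤ 2 ^ a := Nat.one_le_two_pow
  have hlt : 2 ^ (a % m) < 2 ^ m - 1 := by omega
  calc 2 ^ a % (2 ^ m - 1) = (2 ^ a - 1 + 1) % (2 ^ m - 1) := by rw [Nat.sub_add_cancel hpos]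
    _ = (2 ^ (a % m) - 1 + 1) % (2 ^ m - 1) := by
      rw [Nat.add_mod, Nat.pow_sub_one_mod_pow_sub_one, Nat.add_mod_mod]
    _ = 2 ^ (a % m) := by rw [Nat.sub_add_cancel Nat.one_le_two_pow, Nat.mod_eq_of_lt hlt]

theorem Finset.sum_range_comp_add_mod {M : Type*} [AddCommMonoid M] (f : ℕ → M) {m j : ℕ}
    (hj : j < m) : ∑ k ∈ range m, f ((k + j) % m) = ∑ k ∈ range m, f k := by
  obtain ⟨m, rfl⟩ : ∃ m', m = m' + 1 := ⟨m - 1, by omega⟩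
  rw [← Fin.sum_univ_eq_sum_range (fun k => f ((k + j) % (m + 1))), ← Fin.sum_univ_eq_sum_range]
  simpa [Fin.val_add, Nat.mod_eq_of_lt hj] using
    Equiv.sum_comp (Equiv.addRight (⟨j, hj⟩ : Fin (m + 1))) (fun k => f k)

theorem Finset.sum_range_comp_sub_add_mod {M : Type*} [AddCommMonoid M] (f : ℕ → M) {m j : ℕ}
    (hj : j < m) : ∑ k ∈ range m, f ((m - k + j) % m) = ∑ k ∈ range m, f k := by
  obtain ⟨m, rfl⟩ : ∃ m', m = m' + 1 := ⟨m - 1, by omega⟩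
  rw [← Fin.sum_univ_eq_sum_range (fun k => f ((m + 1 - k + j) % (m + 1))),
    ← Fin.sum_univ_eq_sum_range]
  simpa [Fin.val_sub] using
    Equiv.sum_comp (Equiv.subLeft (⟨j, hj⟩ : Fin (m + 1))) (fun k => f k)

theorem Nat.add_mod_eq_iff_eq_sub_add_mod {m l k j : ℕ} (hl : l < m) (hk : k < m) (hj : j < m) :
    (l + k) % m = j ↔ l = (m - k + j) % m := by
  obtain ⟨m, rfl⟩ : ∃ m', m = m' + 1 := ⟨m - 1, by omega⟩
  simpa [Fin.ext_iff, Fin.val_add, Fin.val_sub, Nat.mod_eq_of_lt hl] using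
    (eq_sub_iff_add_eq (a := (⟨l, hl⟩ : Fin (m + 1))) (b := ⟨j, hj⟩) (c := ⟨k, hk⟩)).symm

theorem Finset.card_filter_forall_testBit_two_pow_add_mod (P : ℕ → Prop) [DecidablePred P]
    {m j : ℕ} (hj : j < m) :
    #{k ∈ range m | ∀ l ∈ range m, (2 ^ j).testBit ((l + k) % m) = true → P l} =
      #{l ∈ range m | P l} := by
  have hcover : ∀ k ∈ range m,
      (∀ l ∈ range m, (2 ^ j).testBit ((l + k) % m) = true → P l) ↔ P ((m - k + j) % m) := by
    intro k hk
    rw [mem_range] at hk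
    simp only [mem_range, Nat.testBit_two_pow, decide_eq_true_eq]
    constructor
    · intro h
      exact h _ (Nat.mod_lt _ (by omega))
        ((Nat.add_mod_eq_iff_eq_sub_add_mod (Nat.mod_lt _ (by omega)) hk hj).2 rfl).symm
    · rintro hP l hl hjl
      rwa [(Nat.add_mod_eq_iff_eq_sub_add_mod hl hk hj).1 hjl.symm]
  rw [card_filter, card_filter, sum_congr rfl fun k hk => if_congr (hcover k hk) rfl rfl,
    sum_range_comp_sub_add_mod (fun l => if P l then 1 else 0) hj]

theorem Nat.testBit_two_pow_four_mul_add_sub_one {i : ℕ} (hi : 1 ≤ i) (t : ℕ) :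
    (2 ^ (4 * i) + 2 ^ (3 * i) + 2 ^ (2 * i) + 2 ^ i - 1).testBit t =
      decide (t < i ∨ t = 2 * i ∨ t = 3 * i ∨ t = 4 * i) := by
  have hone : 1 < 2 ^ i := Nat.one_lt_two_pow (by omega)
  -- base `2 ^ i` digits, least significant first: `2 ^ i - 1, 0, 1, 1, 1`
  have hdigits : 2 ^ (4 * i) + 2 ^ (3 * i) + 2 ^ (2 * i) + 2 ^ i - 1 =
      2 ^ i * (2 ^ i * (2 ^ i * (2 ^ i * 2 ^ 0 + 2 ^ 0) + 2 ^ 0) + 0) + (2 ^ i - 1) := by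
    have h : 2 ^ i * (2 ^ i * (2 ^ i * (2 ^ i * 2 ^ 0 + 2 ^ 0) + 2 ^ 0) + 0) =
        2 ^ (4 * i) + 2 ^ (3 * i) + 2 ^ (2 * i) := by ring
    omega
  rw [hdigits, Nat.testBit_two_pow_mul_add _ (by omega), Nat.testBit_two_pow_mul_add _ (by omega),
    Nat.testBit_two_pow_mul_add _ (by omega), Nat.testBit_two_pow_mul_add _ (by omega)]
  simp only [Nat.testBit_two_pow_sub_one, Nat.zero_testBit, Nat.testBit_two_pow]
  split_ifs <;> simp only [decide_eq_decide, Bool.false_eq, decide_eq_false_iff_not] <;> omega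

theorem card_filter_range_five_mul {i : ℕ} (hi : 1 ≤ i) :
    #{l ∈ range (5 * i) | l < i ∨ l = 2 * i ∨ l = 3 * i ∨ l = 4 * i} = i + 3 := by
  have hsupport : {l ∈ range (5 * i) | l < i ∨ l = 2 * i ∨ l = 3 * i ∨ l = 4 * i} =
      range i ∪ {2 * i, 3 * i, 4 * i} := by
    ext l
    simp only [mem_filter, mem_range, mem_union, mem_insert, mem_singleton]
    omega
  rw [hsupport, card_union_of_disjoint (by simp; omega), card_range,
    card_insert_of_notMem (by simp; omega), card_pair (by omega)]

theorem stmt_16 (i m n e : ℕ) (hi : 1 ≤ i) (hm : m = 5 * i)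
    (hn : n = 2 ^ m - 1)
    (he : e = 2 ^ (4 * i) + 2 ^ (3 * i) + 2 ^ (2 * i) + 2 ^ i - 1)
    (j : ℕ) (hj : j < m) :
    ((Finset.range m).filter (fun k => ∀ l ∈ Finset.range m,
        (2 ^ j : ℕ).testBit ((l + k) % m) = true →
          (l < i ∨ l = 2 * i ∨ l = 3 * i ∨ l = 4 * i))).card = i + 3 ∧
    (∑ k ∈ Finset.range m, Nat.choose e ((2 ^ k * 2 ^ j) % n)) % 2 =
      (i + 1) % 2 := by
  subst hm hn
  refine ⟨?_, ?_⟩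
  · rw [card_filter_forall_testBit_two_pow_add_mod _ hj, card_filter_range_five_mul hi]
  · calc (∑ k ∈ range (5 * i), e.choose ((2 ^ k * 2 ^ j) % (2 ^ (5 * i) - 1))) % 2
        = (∑ t ∈ range (5 * i), e.choose (2 ^ t)) % 2 := by
          simp_rw [← pow_add, Nat.two_pow_mod_two_pow_sub_one (by omega : 2 ≤ 5 * i)]
          rw [sum_range_comp_add_mod (fun t => e.choose (2 ^ t)) hj]
      _ = #{t ∈ range (5 * i) | e.testBit t} % 2 := by
          rw [sum_nat_mod, card_filter]
          simp_rw [Nat.choose_two_pow_mod_two]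
      _ = (i + 3) % 2 := by
          simp_rw [he, Nat.testBit_two_pow_four_mul_add_sub_one hi, decide_eq_true_eq]
          rw [card_filter_range_five_mul hi]
      _ = (i + 1) % 2 := by omega
end
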